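/- Let H be a real Hilbert space, K ⊆ H nonempty closed convex, and a : H × H → ℝ a continuous coercive symmetric bilinear form. Then the functional E(v) = (1/2)a(v,v) − ⟨f, v⟩ has a unique minimizer on K, and hence the variational inequality a(u, v−u) ≥ ⟨f, v−u⟩ for all v ∈ K has a unique solution u ∈ K. -/

import Mathlib

open Filter Topology Set

/-! The energy `E v = a v v / 2 - ⟪f, v⟫` satisfies the parallelogram-type identity
`E u + E w - 2 E ((u + w) / 2) = a (u - w) (u - w) / 4 ≥ α ‖u - w‖² / 4`, so near-minimizers of `E`
on the convex set `K` are close to each other: they form a Cauchy filter, whose limit lies in `K`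
and minimizes `E` by continuity. Expanding `E (u + t (v - u))` in `t` shows that `u` minimizes `E`
on `K` iff it solves the variational inequality, and two solutions `u`, `w` of the inequality
satisfy `a (u - w) (u - w) ≤ 0`, hence coincide. -/

theorem exists_isMinOn_of_strongly_midpoint_convex {E : Type*} [NormedAddCommGroup E]
    [NormedSpace ℝ E] [CompleteSpace E] {K : Set E} {φ : E → ℝ} {c : ℝ}
    (hK : K.Nonempty) (hKc : IsClosed K) (hKconv : Convex ℝ K) (hφ : Continuous φ)
    (hbdd : BddBelow (φ '' K)) (hc : 0 < c)
    (hmid : ∀ u ∈ K, ∀ w ∈ K, c * ‖u - w‖ ^ 2 ≤ φ u + φ w - 2 * φ (midpoint ℝ u w)) :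
    ∃ x ∈ K, IsMinOn φ K x := by
  set d := sInf (φ '' K)
  have hd : ∀ v ∈ K, d ≤ φ v := fun v hv => csInf_le hbdd (mem_image_of_mem φ hv)
  have near_close : ∀ δ, ∀ u ∈ K, ∀ w ∈ K, φ u < d + δ → φ w < d + δ →
      c * ‖u - w‖ ^ 2 < 2 * δ := fun δ u hu w hw hu' hw' => by
    linarith [hmid u hu w hw, hd _ (hKconv.midpoint_mem hu hw)]
  set F := 𝓟 K ⊓ comap φ (𝓝 d)
  have hF : F.NeBot := by
    rw [← map_neBot_iff φ, Filter.push_pull, map_principal, inf_comm]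
    exact mem_closure_iff_clusterPt.mp (csInf_mem_closure (hK.image φ) hbdd)
  have hFc : Cauchy F := by
    refine Metric.cauchy_iff.mpr ⟨hF, fun ε hε => ?_⟩
    have hδ : d < d + c * ε ^ 2 / 2 := by have := mul_pos hc (pow_pos hε 2); linarith
    refine ⟨K ∩ φ ⁻¹' Iio (d + c * ε ^ 2 / 2), inter_mem (mem_inf_of_left (mem_principal_self K))
      (mem_inf_of_right (preimage_mem_comap (Iio_mem_nhds hδ))), ?_⟩
    rintro u ⟨hu, hu'⟩ w ⟨hw, hw'⟩
    have := near_close _ u hu w hw hu' hw'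
    rw [dist_eq_norm]
    exact lt_of_pow_lt_pow_left₀ 2 hε.le (by nlinarith)
  obtain ⟨x, hx⟩ := CompleteSpace.complete hFc
  have hxK : x ∈ K :=
    hKc.mem_of_tendsto (tendsto_id'.2 hx) (mem_inf_of_left (mem_principal_self K))
  have hφx : φ x = d :=
    tendsto_nhds_unique ((hφ.tendsto x).mono_left hx) (tendsto_comap.mono_left inf_le_right)
  exact ⟨x, hxK, fun v hv => hφx ▸ hd v hv⟩

theorem nonneg_of_forall_mul_add_sq_mul_nonneg {g q : ℝ}
    (h : ∀ t ∈ Ioo (0 : ℝ) 1, 0 ≤ t * g + t ^ 2 * q) : 0 ≤ g := by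
  have hlim : Tendsto (fun t : ℝ => g + t * q) (𝓝[>] 0) (𝓝 g) := by
    have : Continuous fun t : ℝ => g + t * q := by fun_prop
    simpa using (this.tendsto 0).mono_left nhdsWithin_le_nhds
  refine ge_of_tendsto hlim (eventually_of_mem (Ioo_mem_nhdsGT one_pos) fun t ht => ?_)
  have := h t ht
  have ht0 : 0 < t := ht.1
  nlinarith

section
variable {H : Type*} [NormedAddCommGroup H] [InnerProductSpace ℝ H]
  (a : H →ₗ[ℝ] H →ₗ[ℝ] ℝ) (f : H)

noncomputable def quadraticEnergy (v : H) : ℝ := (1 / 2) * a v v - inner ℝ f v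

theorem quadraticEnergy_add_smul (hsymm : ∀ u v : H, a u v = a v u) (u v : H) (t : ℝ) :
    quadraticEnergy a f (u + t • v) =
      quadraticEnergy a f u + t * (a u v - inner ℝ f v) + t ^ 2 / 2 * a v v := by
  simp only [quadraticEnergy, map_add, map_smul, LinearMap.add_apply, LinearMap.smul_apply,
    smul_eq_mul, inner_add_right, real_inner_smul_right]
  linear_combination (t / 2) * hsymm v u

theorem quadraticEnergy_add_sub_two_mul_midpoint (u w : H) :
    quadraticEnergy a f u + quadraticEnergy a f w - 2 * quadraticEnergy a f (midpoint ℝ u w) =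
      a (u - w) (u - w) / 4 := by
  simp only [quadraticEnergy, midpoint_eq_smul_add, map_add, map_sub, map_smul,
    LinearMap.add_apply, LinearMap.sub_apply, LinearMap.smul_apply, smul_eq_mul, inner_add_right,
    real_inner_smul_right]
  norm_num
  ring

theorem continuous_quadraticEnergy {C : ℝ} (hbound : ∀ u v : H, |a u v| ≤ C * ‖u‖ * ‖v‖) :
    Continuous (quadraticEnergy a f) := by
  let A := a.mkContinuous₂ C hbound
  have hA : Continuous fun v => A v v := A.continuous₂.comp (continuous_id.prodMk continuous_id)
  exact (continuous_const.mul hA).sub (continuous_const.inner continuous_id)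

theorem neg_sq_norm_div_le_quadraticEnergy {α : ℝ} (hα : 0 < α)
    (hcoer : ∀ v : H, α * ‖v‖ ^ 2 ≤ a v v) (v : H) : -(‖f‖ ^ 2 / (2 * α)) ≤ quadraticEnergy a f v := by
  have hf := real_inner_le_norm f v
  have hsq : ‖f‖ ^ 2 / (2 * α) * (2 * α) = ‖f‖ ^ 2 := div_mul_cancel₀ _ (by positivity)
  unfold quadraticEnergy
  nlinarith [hcoer v, sq_nonneg (α * ‖v‖ - ‖f‖)]

theorem isMinOn_quadraticEnergy_iff (hsymm : ∀ u v : H, a u v = a v u) (hpos : ∀ v, 0 ≤ a v v)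
    {K : Set H} (hK : Convex ℝ K) {u : H} (hu : u ∈ K) :
    IsMinOn (quadraticEnergy a f) K u ↔ ∀ v ∈ K, inner ℝ f (v - u) ≤ a u (v - u) := by
  rw [isMinOn_iff]
  have hsplit := quadraticEnergy_add_smul a f hsymm u
  refine ⟨fun hmin v hv => sub_nonneg.mp (nonneg_of_forall_mul_add_sq_mul_nonneg
    (q := a (v - u) (v - u) / 2) fun t ht => ?_), fun hvi v hv => ?_⟩
  · have := hmin _ (hK.add_smul_sub_mem hu hv (Ioo_subset_Icc_self ht))
    rw [hsplit] at this
    linarith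
  · have := hsplit (v - u) 1
    rw [one_smul, add_sub_cancel] at this
    linarith [hvi v hv, hpos (v - u)]

theorem eq_of_forall_inner_le_apply_sub {α : ℝ} (hα : 0 < α)
    (hcoer : ∀ v : H, α * ‖v‖ ^ 2 ≤ a v v) {K : Set H} {u w : H} (hu : u ∈ K) (hw : w ∈ K)
    (hvu : ∀ v ∈ K, inner ℝ f (v - u) ≤ a u (v - u))
    (hvw : ∀ v ∈ K, inner ℝ f (v - w) ≤ a w (v - w)) : u = w := by
  have hsum : a (u - w) (u - w) ≤ 0 := by
    have h₁ := hvu w hw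
    have h₂ := hvw u hu
    rw [← neg_sub u w, inner_neg_right, map_neg] at h₁
    simp only [map_sub, LinearMap.sub_apply] at h₁ h₂ ⊢
    linarith
  have : ‖u - w‖ ^ 2 ≤ 0 := by nlinarith [hcoer (u - w)]
  rwa [sq_nonpos_iff, norm_eq_zero, sub_eq_zero] at this
end

theorem vi_existence_uniqueness {H : Type*} [NormedAddCommGroup H] [InnerProductSpace ℝ H]
    [CompleteSpace H] (K : Set H) (hK : K.Nonempty) (hKc : IsClosed K) (hKconv : Convex ℝ K)
    (a : H →ₗ[ℝ] H →ₗ[ℝ] ℝ) (C : ℝ) (hbound : ∀ u v : H, |a u v| ≤ C * ‖u‖ * ‖v‖)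
    (hsymm : ∀ u v : H, a u v = a v u)
    (α : ℝ) (hα : 0 < α) (hcoer : ∀ v : H, α * ‖v‖ ^ 2 ≤ a v v)
    (f : H) :
    (∃! u : H, u ∈ K ∧
        ∀ v ∈ K, (1 / 2) * a u u - (inner ℝ f u : ℝ) ≤ (1 / 2) * a v v - (inner ℝ f v : ℝ)) ∧
    (∃! u : H, u ∈ K ∧ ∀ v ∈ K, a u (v - u) ≥ (inner ℝ f (v - u) : ℝ)) := by
  have hpos : ∀ v, 0 ≤ a v v := fun v => (by positivity : 0 ≤ α * ‖v‖ ^ 2).trans (hcoer v)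
  have hvi : ∀ u ∈ K,
      IsMinOn (quadraticEnergy a f) K u ↔ ∀ v ∈ K, inner ℝ f (v - u) ≤ a u (v - u) :=
    fun u hu => isMinOn_quadraticEnergy_iff a f hsymm hpos hKconv hu
  have huniq : ∀ u ∈ K, ∀ w ∈ K, (∀ v ∈ K, inner ℝ f (v - u) ≤ a u (v - u)) →
      (∀ v ∈ K, inner ℝ f (v - w) ≤ a w (v - w)) → u = w :=
    fun u hu w hw => eq_of_forall_inner_le_apply_sub a f hα hcoer hu hw
  obtain ⟨x, hxK, hxmin⟩ := exists_isMinOn_of_strongly_midpoint_convex hK hKc hKconv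
    (continuous_quadraticEnergy a f hbound)
    ⟨_, forall_mem_image.mpr fun v _ => neg_sq_norm_div_le_quadraticEnergy a f hα hcoer v⟩
    (by positivity : 0 < α / 4) fun u _ w _ => by
      rw [quadraticEnergy_add_sub_two_mul_midpoint]
      linarith [hcoer (u - w)]
  have hxvi := (hvi x hxK).mp hxmin
  exact ⟨⟨x, ⟨hxK, hxmin⟩, fun y ⟨hyK, hymin⟩ => huniq y hyK x hxK ((hvi y hyK).mp hymin) hxvi⟩,
    ⟨x, ⟨hxK, hxvi⟩, fun y ⟨hyK, hyvi⟩ => huniq y hyK x hxK hyvi hxvi⟩⟩
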